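/- With ρ(λ)e^{iτ(λ)} = Ŝ(λ) the characteristic function of the sampling law, for all r ∈ [0,1) and θ ∈ (-π, π): (1/4)∫_{-π}^{π} (1/π + P_{rρ(λ)}(τ(λ) - θ) + P_{rρ(λ)}(τ(λ) + θ)) dλ = 1. -/

import Mathlib

/-!
`2π P_s(t)` is the real part of the Cayley transform `(1 + w)/(1 - w)` at `w = s e^{it}`, and
`r ρ(λ) e^{i(τ(λ) ∓ θ)} = a Ŝ(λ)` with `a = r e^{∓iθ}`. Because `S` lives on the positive
integers, `Ŝ(λ) = f(e^{iλ})` for the generating function `f(w) = ∑ S(j) wʲ`, which is holomorphic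
on the unit disc, continuous and bounded by `1` on its closure, and vanishes at `0`. So
`(1 + a f)/(1 - a f)` is holomorphic on the disc with value `1` at the centre, and by the mean
value property each Poisson term integrates to `1`, while `1/π` integrates to `2`.
-/

open Real MeasureTheory

/-- The Poisson kernel `P_s(t) = (1/(2π)) (1-s²)/(1-2s cos t + s²)`. -/
noncomputable def poissonKernel' (s t : ℝ) : ℝ :=
  (1 - s ^ 2) / (2 * π * (1 - 2 * s * Real.cos t + s ^ 2))

open Complex Metric FormalMultilinearSeries

lemma poissonKernel'_eq_poissonKernel (s t : ℝ) :
    poissonKernel' s t = poissonKernel 0 (s * exp (t * I)) 1 / (2 * π) := by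
  have hnorm : ‖(1 : ℂ) - s * exp (t * I)‖ ^ 2 = 1 - 2 * s * Real.cos t + s ^ 2 := by
    rw [Complex.sq_norm, normSq_apply]
    simp only [sub_re, one_re, mul_re, ofReal_re, exp_ofReal_mul_I_re, ofReal_im,
      exp_ofReal_mul_I_im, zero_mul, sub_zero, sub_im, one_im, mul_im, add_zero, zero_sub, mul_neg,
      neg_mul, neg_neg]
    linear_combination s ^ 2 * Real.sin_sq_add_cos_sq t
  rw [poissonKernel_def, sub_zero, sub_zero, hnorm, norm_mul, norm_exp_ofReal_mul_I, norm_real,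
    norm_one, Real.norm_eq_abs, mul_one, sq_abs, one_pow, poissonKernel', div_div, mul_comm]

lemma poissonKernel'_eq_re (s t : ℝ) :
    poissonKernel' s t =
      ((1 + s * exp (t * I)) / (1 - s * exp (t * I))).re / (2 * π) := by
  rw [poissonKernel'_eq_poissonKernel, poissonKernel_eq_re_herglotzRieszKernel,
    Function.comp_apply, herglotzRieszKernel_def]
  simp only [sub_zero]

lemma intervalIntegral_comp_exp_mul_I_eq_circleAverage {E : Type*} [NormedAddCommGroup E]
    [NormedSpace ℝ E] (F : ℂ → E) :
    ∫ t in (-π)..π, F (exp (t * I)) = (2 * π) • circleAverage F 0 1 := by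
  rw [circleAverage_eq_integral_add (-π), smul_inv_smul₀ (by positivity),
    intervalIntegral.integral_comp_add_right (fun t ↦ F (circleMap 0 1 t))]
  simp only [circleMap, ofReal_one, one_mul, zero_add]
  rw [show 2 * π + -π = π by ring]

lemma DiffContOnCl.circleAverage_re {f : ℂ → ℂ} {c : ℂ} {R : ℝ}
    (hf : DiffContOnCl ℂ f (ball c |R|)) :
    Real.circleAverage (fun z ↦ (f z).re) c R = (f c).re := by
  rw [← hf.circleAverage]
  exact reCLM.circleAverage_comp_comm
    (hf.continuousOn_ball.mono sphere_subset_closedBall).circleIntegrable'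

lemma DiffContOnCl.cayley {g : ℂ → ℂ} {s : Set ℂ} (hg : DiffContOnCl ℂ g s)
    (hg1 : ∀ z ∈ closure s, g z ≠ 1) : DiffContOnCl ℂ (fun z ↦ (1 + g z) / (1 - g z)) s := by
  simp_rw [div_eq_mul_inv]
  exact (hg.const_add 1).smul ((hg.const_sub 1).inv fun z hz ↦ sub_ne_zero.2 (hg1 z hz).symm)

lemma diffContOnCl_cayley_const_mul {f : ℂ → ℂ} (hf : DiffContOnCl ℂ f (ball 0 1))
    (hf1 : ∀ z ∈ closedBall 0 1, ‖f z‖ ≤ 1) {a : ℂ} (ha : ‖a‖ < 1) :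
    DiffContOnCl ℂ (fun z ↦ (1 + a * f z) / (1 - a * f z)) (ball 0 1) := by
  have haf : DiffContOnCl ℂ (fun z ↦ a * f z) (ball 0 1) :=
    (diffContOnCl_const (c := a)).smul hf
  refine haf.cayley fun z hz ↦ ne_of_apply_ne norm (ne_of_lt ?_)
  rw [closure_ball 0 one_ne_zero] at hz
  calc ‖a * f z‖ ≤ ‖a‖ * 1 := by rw [norm_mul]; gcongr; exact hf1 z hz
    _ < ‖(1 : ℂ)‖ := by simpa using ha

section GeneratingFunction

variable {c : ℕ → ℂ}

lemma norm_mul_pow_le_of_norm_le_one (n : ℕ) {w : ℂ} (hw : ‖w‖ ≤ 1) :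
    ‖c n * w ^ n‖ ≤ ‖c n‖ := by
  rw [norm_mul, norm_pow]
  exact mul_le_of_le_one_right (norm_nonneg _) (pow_le_one₀ (norm_nonneg _) hw)

lemma norm_ofScalarsSum_le (hc : Summable (‖c ·‖)) {w : ℂ} (hw : ‖w‖ ≤ 1) :
    ‖ofScalarsSum c w‖ ≤ ∑' n, ‖c n‖ := by
  rw [ofScalars_sum_eq]
  exact tsum_of_norm_bounded hc.hasSum fun n ↦ norm_mul_pow_le_of_norm_le_one n hw

lemma diffContOnCl_ofScalarsSum (hc : Summable (‖c ·‖)) :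
    DiffContOnCl ℂ (ofScalarsSum c) (ball (0 : ℂ) 1) := by
  rw [ofScalarsSum_eq_tsum]
  refine DiffContOnCl.mk_ball ?_ ?_
  · refine differentiableOn_tsum_of_summable_norm hc (fun n ↦ by fun_prop) isOpen_ball
      fun n w hw ↦ norm_mul_pow_le_of_norm_le_one n ?_
    exact (mem_ball_zero_iff.1 hw).le
  · exact continuousOn_tsum (fun n ↦ by fun_prop) hc
      fun n w hw ↦ norm_mul_pow_le_of_norm_le_one n (mem_closedBall_zero_iff.1 hw)

end GeneratingFunction

lemma exists_diffContOnCl_eq_charFun (S : ℕ → ℝ) (hS0 : S 0 = 0) (hSnonneg : ∀ j, 0 ≤ S j)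
    (hSsum : ∑' j : ℕ, S j = 1) :
    ∃ f : ℂ → ℂ, DiffContOnCl ℂ f (ball 0 1) ∧ f 0 = 0 ∧ (∀ z ∈ closedBall 0 1, ‖f z‖ ≤ 1) ∧
      ∀ lam : ℝ, ∑' j : ℕ, (S j : ℂ) * exp (I * j * lam) = f (exp (lam * I)) := by
  have hS_norm : (fun j ↦ ‖(S j : ℂ)‖) = S := funext fun j ↦ by simp [abs_of_nonneg (hSnonneg j)]
  have hS : Summable fun j ↦ ‖(S j : ℂ)‖ := by
    rw [hS_norm]
    by_contra h
    simp [tsum_eq_zero_of_not_summable h] at hSsum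
  refine ⟨ofScalarsSum fun j ↦ (S j : ℂ), diffContOnCl_ofScalarsSum hS, by simp [hS0],
    fun z hz ↦ ?_, fun lam ↦ ?_⟩
  · exact (norm_ofScalarsSum_le hS (mem_closedBall_zero_iff.1 hz)).trans_eq
      (by rw [hS_norm, hSsum])
  · rw [ofScalars_sum_eq]
    congr! 2 with j
    rw [smul_eq_mul, ← Complex.exp_nat_mul]
    ring_nf

theorem poisson_integral_eq_one_general
    (S : ℕ → ℝ) (hS0 : S 0 = 0) (hSnonneg : ∀ j, 0 ≤ S j)
    (hSsum : ∑' j : ℕ, S j = 1)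
    (Shat : ℝ → ℂ)
    (hShat : ∀ lam : ℝ, Shat lam =
      ∑' j : ℕ, (S j : ℂ) * Complex.exp (Complex.I * j * lam))
    (ρ τ : ℝ → ℝ)
    (hρ : ∀ lam, ρ lam = ‖Shat lam‖)
    (hτ : ∀ lam, τ lam = Complex.arg (Shat lam))
    (r θ : ℝ) (hr0 : 0 ≤ r) (hr1 : r < 1) :
    (1 / 4) * ∫ lam in (-π)..π,
        (1 / π + poissonKernel' (r * ρ lam) (τ lam - θ)
          + poissonKernel' (r * ρ lam) (τ lam + θ)) = 1 := by
  obtain ⟨f, hf, hf0, hf1, hf_eq⟩ := exists_diffContOnCl_eq_charFun S hS0 hSnonneg hSsum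
  set a : ℝ → ℂ := fun φ ↦ r * exp (φ * I)
  have ha (φ : ℝ) : ‖a φ‖ < 1 := by
    rwa [norm_mul, norm_exp_ofReal_mul_I, norm_real, Real.norm_of_nonneg hr0, mul_one]
  have hpolar (lam φ : ℝ) :
      ((r * ρ lam : ℝ) : ℂ) * exp ((τ lam + φ : ℝ) * I) = a φ * f (exp (lam * I)) := by
    rw [← hf_eq, ← hShat, ← norm_mul_exp_arg_mul_I (Shat lam), ← hρ, ← hτ]
    push_cast
    rw [add_mul, Complex.exp_add]
    ring
  set G : ℂ → ℂ := fun z ↦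
    2 + (1 + a (-θ) * f z) / (1 - a (-θ) * f z) + (1 + a θ * f z) / (1 - a θ * f z)
  have hG : DiffContOnCl ℂ G (ball 0 |1|) := by
    rw [abs_one]
    exact ((diffContOnCl_cayley_const_mul hf hf1 (ha (-θ))).const_add 2).add
      (diffContOnCl_cayley_const_mul hf hf1 (ha θ))
  have hintegrand (lam : ℝ) : 1 / π + poissonKernel' (r * ρ lam) (τ lam - θ)
      + poissonKernel' (r * ρ lam) (τ lam + θ) = (G (exp (lam * I))).re / (2 * π) := by
    rw [poissonKernel'_eq_re, poissonKernel'_eq_re, sub_eq_add_neg, hpolar, hpolar]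
    simp only [G, add_re]
    field_simp
    norm_num
  calc (1 / 4) * ∫ lam in (-π)..π, (1 / π + poissonKernel' (r * ρ lam) (τ lam - θ)
          + poissonKernel' (r * ρ lam) (τ lam + θ))
      _ = (1 / 4) * ∫ lam in (-π)..π, (G (exp (lam * I))).re / (2 * π) := by
        simp_rw [hintegrand]
      _ = (1 / 4) * (G 0).re := by
        rw [intervalIntegral.integral_div,
          intervalIntegral_comp_exp_mul_I_eq_circleAverage (fun z ↦ (G z).re), hG.circleAverage_re, smul_eq_mul]
        field_simp
      _ = 1 := by
        simp only [G, hf0, mul_zero, add_zero, sub_zero, div_one]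
        norm_num

/-- With `Ŝ(λ) = ρ(λ)e^{iτ(λ)}` the characteristic function of a sampling law on the
positive integers, for all `r ∈ [0,1)` and `θ ∈ (-π,π)`,
`(1/4)∫_{-π}^{π} (1/π + P_{rρ}(τ-θ) + P_{rρ}(τ+θ)) dλ = 1`. -/
theorem poisson_integral_eq_one
    (S : ℕ → ℝ) (hS0 : S 0 = 0) (hSnonneg : ∀ j, 0 ≤ S j)
    (hSsum : ∑' j : ℕ, S j = 1)
    (Shat : ℝ → ℂ)
    (hShat : ∀ lam : ℝ, Shat lam =
      ∑' j : ℕ, (S j : ℂ) * Complex.exp (Complex.I * j * lam))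
    (ρ τ : ℝ → ℝ)
    (hρ : ∀ lam, ρ lam = ‖Shat lam‖)
    (hτ : ∀ lam, τ lam = Complex.arg (Shat lam))
    (r θ : ℝ) (hr0 : 0 ≤ r) (hr1 : r < 1) (hθ1 : -π < θ) (hθ2 : θ < π) :
    (1 / 4) * ∫ lam in (-π)..π,
        (1 / π + poissonKernel' (r * ρ lam) (τ lam - θ)
          + poissonKernel' (r * ρ lam) (τ lam + θ)) = 1 :=
  poisson_integral_eq_one_general S hS0 hSnonneg hSsum Shat hShat ρ τ hρ hτ r θ hr0 hr1
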